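/- Let u₁, u₂ be continuous real functions on the closure (in the Euclidean closed disk) of a domain Ω in the disk model of H², both satisfying the minimal vertical graph equation in Ω, with u₁ ≤ u₂ on the full boundary ∂Ω ∪ ∂∞Ω. Then u₁ ≤ u₂ on Ω. -/

import Mathlib

noncomputable def px (u : ℝ × ℝ → ℝ) (p : ℝ × ℝ) : ℝ := deriv (fun x => u (x, p.2)) p.1
noncomputable def py (u : ℝ × ℝ → ℝ) (p : ℝ × ℝ) : ℝ := deriv (fun y => u (p.1, y)) p.2
noncomputable def pxx (u : ℝ × ℝ → ℝ) (p : ℝ × ℝ) : ℝ := deriv (fun x => px u (x, p.2)) p.1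
noncomputable def pyy (u : ℝ × ℝ → ℝ) (p : ℝ × ℝ) : ℝ := deriv (fun y => py u (p.1, y)) p.2
noncomputable def pxy (u : ℝ × ℝ → ℝ) (p : ℝ × ℝ) : ℝ := deriv (fun y => px u (p.1, y)) p.2

/-- The conformal factor `F = (1 − x² − y²)/2` of the disk model. -/
noncomputable def F (p : ℝ × ℝ) : ℝ := (1 - p.1 ^ 2 - p.2 ^ 2) / 2

/-- The minimal vertical graph equation in the Poincaré disk model of `ℍ²`:
`(1 + F²u_x²)u_yy + (1 + F²u_y²)u_xx − 2F²u_x u_y u_xy + 2F(x u_x + y u_y)(u_x² + u_y²) = 0`. -/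
def MinimalEqDisk (u : ℝ × ℝ → ℝ) (p : ℝ × ℝ) : Prop :=
  (1 + (F p) ^ 2 * (px u p) ^ 2) * pyy u p + (1 + (F p) ^ 2 * (py u p) ^ 2) * pxx u p
    - 2 * (F p) ^ 2 * px u p * py u p * pxy u p
    + 2 * F p * (p.1 * px u p + p.2 * py u p) * ((px u p) ^ 2 + (py u p) ^ 2) = 0


/-!
Suppose `w = u₁ - u₂` is positive somewhere and let `m` be half of that value. The part
`S = {w ≥ m}` of the closure is compact and, by the boundary inequality, contained in `Ω`, so
`∇u₂` and `∇²u₂` are bounded on `S`. Add the barrier `ε e^{κx}`: for `ε` small the maximum `P` of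
`w + ε e^{κx}` over the closure still lies in `S`. At `P` the first-order condition gives
`∇u₁ = ∇u₂ - δ e₁` with `δ = εκ e^{κx}`, and the second-order condition, paired with the positive
definite principal part of the equation for `u₁`, contributes `-κδ` to the difference of the two
equations. Shifting the gradient by `δ e₁` changes the rest only by `O(δ)`, with a constant
depending on the bounds on `S`; for `κ` larger than that constant the difference of the
equations is negative instead of zero.
-/

open Set Filter Topology

section Calculus

variable {E : Type*} [NormedAddCommGroup E] [NormedSpace ℝ E] {f f₁ f₂ φ : E → ℝ} {a : E}

lemma IsLocalMax.deriv_deriv_nonpos {f : ℝ → ℝ} {x : ℝ} (h : IsLocalMax f x)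
    (hc : ContinuousAt f x) : deriv (deriv f) x ≤ 0 := by
  by_contra! hpos
  have hconst : f =ᶠ[𝓝 x] fun _ => f x :=
    (h.and (isLocalMin_of_deriv_deriv_pos hpos h.deriv_eq_zero hc)).mono
      fun _ hy => le_antisymm hy.1 hy.2
  have hderiv : deriv f =ᶠ[𝓝 x] fun _ => 0 :=
    hconst.deriv.trans (Eventually.of_forall fun _ => deriv_const _ _)
  simp [hderiv.deriv_eq] at hpos

lemma ContDiffAt.eventually_differentiableAt (hf : ContDiffAt ℝ 2 f a) :
    ∀ᶠ x in 𝓝 a, DifferentiableAt ℝ f x :=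
  (hf.eventually (by simp)).mono fun _ hx => hx.differentiableAt (by norm_num)

lemma ContDiffAt.differentiableAt_fderiv (hf : ContDiffAt ℝ 2 f a) :
    DifferentiableAt ℝ (fderiv ℝ f) a :=
  (hf.fderiv_right (m := 1) (by norm_num)).differentiableAt one_ne_zero

lemma ContDiffAt.fderiv_fderiv_apply (hf : ContDiffAt ℝ 2 f a) (w d : E) :
    fderiv ℝ (fun x => fderiv ℝ f x w) a d = fderiv ℝ (fderiv ℝ f) a d w := by
  rw [fderiv_clm_apply hf.differentiableAt_fderiv (differentiableAt_const w)]
  simp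

lemma IsLocalMax.fderiv_fderiv_apply_self_nonpos (h : IsLocalMax f a) (hf : ContDiffAt ℝ 2 f a)
    (d : E) : fderiv ℝ (fderiv ℝ f) a d d ≤ 0 := by
  set ℓ : ℝ → E := fun t => a + t • d
  have hℓ : ∀ t, HasDerivAt ℓ d t := fun t => by
    simpa [ℓ] using ((hasDerivAt_id' t).smul_const d).const_add a
  have hℓ0 : ℓ 0 = a := by simp [ℓ]
  have hℓa : Tendsto ℓ (𝓝 0) (𝓝 a) := hℓ0 ▸ (hℓ 0).continuousAt.tendsto
  have hmax : IsLocalMax (f ∘ ℓ) 0 := (hℓ0 ▸ h).comp_continuous (hℓ 0).continuousAt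
  have hderiv : deriv (f ∘ ℓ) =ᶠ[𝓝 0] fun t => fderiv ℝ f (ℓ t) d :=
    (hℓa.eventually hf.eventually_differentiableAt).mono fun t ht =>
      (ht.hasFDerivAt.comp_hasDerivAt t (hℓ t)).deriv
  have hderiv2 : HasDerivAt (fun t => fderiv ℝ f (ℓ t) d) (fderiv ℝ (fderiv ℝ f) a d d) 0 := by
    have := (hℓ0 ▸ hf.differentiableAt_fderiv).hasFDerivAt.comp_hasDerivAt 0 (hℓ 0)
    simpa [hℓ0] using this.clm_apply (hasDerivAt_const 0 d)
  calc fderiv ℝ (fderiv ℝ f) a d d = deriv (deriv (f ∘ ℓ)) 0 := by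
        rw [hderiv.deriv_eq, hderiv2.deriv]
    _ ≤ 0 := hmax.deriv_deriv_nonpos (hf.continuousAt.comp_of_eq (hℓ 0).continuousAt hℓ0)

lemma fderiv_sub_add_const_mul (h₁ : DifferentiableAt ℝ f₁ a) (h₂ : DifferentiableAt ℝ f₂ a)
    (hφ : DifferentiableAt ℝ φ a) (ε : ℝ) :
    fderiv ℝ (fun x => f₁ x - f₂ x + ε * φ x) a
      = fderiv ℝ f₁ a - fderiv ℝ f₂ a + ε • fderiv ℝ φ a := by
  rw [fderiv_fun_add (f := fun x => f₁ x - f₂ x) (h₁.sub h₂) (hφ.const_mul ε),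
    fderiv_fun_sub h₁ h₂, fderiv_const_mul hφ ε]

lemma ContDiffAt.fderiv_fderiv_sub_add_const_mul (h₁ : ContDiffAt ℝ 2 f₁ a)
    (h₂ : ContDiffAt ℝ 2 f₂ a) (hφ : ContDiffAt ℝ 2 φ a) (ε : ℝ) :
    fderiv ℝ (fderiv ℝ fun x => f₁ x - f₂ x + ε * φ x) a
      = fderiv ℝ (fderiv ℝ f₁) a - fderiv ℝ (fderiv ℝ f₂) a + ε • fderiv ℝ (fderiv ℝ φ) a := by
  have hD : fderiv ℝ (fun x => f₁ x - f₂ x + ε * φ x)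
      =ᶠ[𝓝 a] fun x => fderiv ℝ f₁ x - fderiv ℝ f₂ x + ε • fderiv ℝ φ x := by
    filter_upwards [h₁.eventually_differentiableAt, h₂.eventually_differentiableAt,
      hφ.eventually_differentiableAt] with x hx₁ hx₂ hxφ
    exact fderiv_sub_add_const_mul hx₁ hx₂ hxφ ε
  have hD₁ := h₁.differentiableAt_fderiv
  have hD₂ := h₂.differentiableAt_fderiv
  have hDφ := hφ.differentiableAt_fderiv
  rw [hD.fderiv_eq, fderiv_fun_add (f := fun x => fderiv ℝ f₁ x - fderiv ℝ f₂ x)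
      (g := fun x => ε • fderiv ℝ φ x) (hD₁.sub hD₂) (hDφ.const_smul ε), fderiv_fun_sub hD₁ hD₂,
    fderiv_fun_const_smul hDφ ε]

end Calculus

section PartialDerivatives

variable {u v : ℝ × ℝ → ℝ} {p : ℝ × ℝ}

lemma px_eq_fderiv (hu : DifferentiableAt ℝ u p) : px u p = fderiv ℝ u p (1, 0) := by
  have hline : HasDerivAt (fun x : ℝ => (x, p.2)) ((1 : ℝ), (0 : ℝ)) p.1 :=
    (hasDerivAt_id p.1).prodMk (hasDerivAt_const p.1 p.2)
  exact (hu.hasFDerivAt.comp_hasDerivAt_of_eq p.1 hline rfl).deriv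

lemma py_eq_fderiv (hu : DifferentiableAt ℝ u p) : py u p = fderiv ℝ u p (0, 1) := by
  have hline : HasDerivAt (fun y : ℝ => (p.1, y)) ((0 : ℝ), (1 : ℝ)) p.2 :=
    (hasDerivAt_const p.2 p.1).prodMk (hasDerivAt_id p.2)
  exact (hu.hasFDerivAt.comp_hasDerivAt_of_eq p.2 hline rfl).deriv

lemma px_congr (h : u =ᶠ[𝓝 p] v) : px u p = px v p :=
  (h.comp_tendsto ((Continuous.prodMk_left p.2).tendsto' p.1 p rfl)).deriv_eq

lemma py_congr (h : u =ᶠ[𝓝 p] v) : py u p = py v p :=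
  (h.comp_tendsto ((Continuous.prodMk_right p.1).tendsto' p.2 p rfl)).deriv_eq

lemma ContDiffAt.px_eventuallyEq (hu : ContDiffAt ℝ 2 u p) :
    px u =ᶠ[𝓝 p] fun q => fderiv ℝ u q (1, 0) :=
  hu.eventually_differentiableAt.mono fun _ hq => px_eq_fderiv hq

lemma ContDiffAt.py_eventuallyEq (hu : ContDiffAt ℝ 2 u p) :
    py u =ᶠ[𝓝 p] fun q => fderiv ℝ u q (0, 1) :=
  hu.eventually_differentiableAt.mono fun _ hq => py_eq_fderiv hq

lemma ContDiffAt.differentiableAt_fderiv_apply (hu : ContDiffAt ℝ 2 u p) (w : ℝ × ℝ) :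
    DifferentiableAt ℝ (fun q => fderiv ℝ u q w) p :=
  hu.differentiableAt_fderiv.clm_apply (differentiableAt_const w)

-- `pxx u = px (px u)`, `pyy u = py (py u)` and `pxy u = py (px u)` hold by definition.
lemma ContDiffAt.pxx_eq (hu : ContDiffAt ℝ 2 u p) :
    pxx u p = fderiv ℝ (fderiv ℝ u) p (1, 0) (1, 0) := by
  rw [pxx, ← px, px_congr hu.px_eventuallyEq, px_eq_fderiv (hu.differentiableAt_fderiv_apply _),
    hu.fderiv_fderiv_apply]

lemma ContDiffAt.pyy_eq (hu : ContDiffAt ℝ 2 u p) :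
    pyy u p = fderiv ℝ (fderiv ℝ u) p (0, 1) (0, 1) := by
  rw [pyy, ← py, py_congr hu.py_eventuallyEq, py_eq_fderiv (hu.differentiableAt_fderiv_apply _),
    hu.fderiv_fderiv_apply]

lemma ContDiffAt.pxy_eq (hu : ContDiffAt ℝ 2 u p) :
    pxy u p = fderiv ℝ (fderiv ℝ u) p (0, 1) (1, 0) := by
  rw [pxy, ← py, py_congr hu.px_eventuallyEq, py_eq_fderiv (hu.differentiableAt_fderiv_apply _),
    hu.fderiv_fderiv_apply]

end PartialDerivatives

/-- `H(e₁,e₁) + H(e₂,e₂) + F² H(ξ,ξ)` with `ξ = (g e₂, -g e₁)`, i.e. the trace of `H` against the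
positive definite matrix `I + F² ξ ξᵀ`. -/
noncomputable def minimalPrincipalPart (p : ℝ × ℝ) (g : ℝ × ℝ →L[ℝ] ℝ)
    (H : ℝ × ℝ →L[ℝ] ℝ × ℝ →L[ℝ] ℝ) : ℝ :=
  H (1, 0) (1, 0) + H (0, 1) (0, 1) + F p ^ 2 * H (g (0, 1), -g (1, 0)) (g (0, 1), -g (1, 0))

noncomputable def minimalLowerPart (p : ℝ × ℝ) (g : ℝ × ℝ →L[ℝ] ℝ) : ℝ :=
  2 * F p * (p.1 * g (1, 0) + p.2 * g (0, 1)) * (g (1, 0) ^ 2 + g (0, 1) ^ 2)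

lemma ContinuousLinearMap.apply_mk_apply_mk (H : ℝ × ℝ →L[ℝ] ℝ × ℝ →L[ℝ] ℝ) (s t : ℝ) :
    H (s, t) (s, t) = s ^ 2 * H (1, 0) (1, 0) + s * t * (H (1, 0) (0, 1) + H (0, 1) (1, 0))
      + t ^ 2 * H (0, 1) (0, 1) := by
  have h : ((s, t) : ℝ × ℝ) = s • ((1, 0) : ℝ × ℝ) + t • ((0, 1) : ℝ × ℝ) := by simp
  rw [h]
  simp only [map_add, map_smul, add_apply, smul_apply, smul_eq_mul]
  ring

lemma minimalEqDisk_iff {u : ℝ × ℝ → ℝ} {p : ℝ × ℝ} (hu : ContDiffAt ℝ 2 u p) :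
    MinimalEqDisk u p ↔
      minimalPrincipalPart p (fderiv ℝ u p) (fderiv ℝ (fderiv ℝ u) p)
        + minimalLowerPart p (fderiv ℝ u p) = 0 := by
  have hsymm := hu.isSymmSndFDerivAt (by simp) (0, 1) (1, 0)
  rw [MinimalEqDisk, minimalPrincipalPart, minimalLowerPart,
    ContinuousLinearMap.apply_mk_apply_mk _ (fderiv ℝ u p (0, 1)),
    px_eq_fderiv (hu.differentiableAt two_ne_zero), py_eq_fderiv (hu.differentiableAt two_ne_zero),
    hu.pxx_eq, hu.pyy_eq, hu.pxy_eq, hsymm]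
  constructor <;> intro h <;> linear_combination h

section MinimalOperator

variable {p : ℝ × ℝ} {g : ℝ × ℝ →L[ℝ] ℝ} {A B H : ℝ × ℝ →L[ℝ] ℝ × ℝ →L[ℝ] ℝ} {G C δ : ℝ}

lemma minimalPrincipalPart_sub :
    minimalPrincipalPart p g (A - B) = minimalPrincipalPart p g A - minimalPrincipalPart p g B := by
  simp only [minimalPrincipalPart, sub_apply]
  ring

lemma minimalPrincipalPart_smul (c : ℝ) :
    minimalPrincipalPart p g (c • A) = c * minimalPrincipalPart p g A := by
  simp only [minimalPrincipalPart, smul_apply, smul_eq_mul]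
  ring

lemma minimalPrincipalPart_nonpos (hA : ∀ d, A d d ≤ 0) : minimalPrincipalPart p g A ≤ 0 :=
  add_nonpos (add_nonpos (hA _) (hA _)) (mul_nonpos_of_nonneg_of_nonpos (sq_nonneg _) (hA _))

lemma abs_F_le (hp : ‖p‖ ≤ 1) : |F p| ≤ 1 / 2 := by
  have h₁ : |p.1| ≤ 1 := (norm_fst_le p).trans hp
  have h₂ : |p.2| ≤ 1 := (norm_snd_le p).trans hp
  rw [F, abs_le]
  constructor <;> nlinarith [abs_le.1 h₁, abs_le.1 h₂, sq_nonneg p.1, sq_nonneg p.2]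

lemma abs_minimalLowerPart_sub_le (hp : ‖p‖ ≤ 1) (hg : ‖g‖ ≤ G) (hδ₀ : 0 ≤ δ) (hδ₁ : δ ≤ 1) :
    |minimalLowerPart p (g - δ • ContinuousLinearMap.fst ℝ ℝ ℝ) - minimalLowerPart p g|
      ≤ 6 * (G + 1) ^ 2 * δ := by
  set a := g (1, 0)
  set b := g (0, 1)
  have hx : |p.1| ≤ 1 := (norm_fst_le p).trans hp
  have ha : |a| ≤ G := by simpa using g.le_of_opNorm_le hg (1, 0)
  have hb : |b| ≤ G := by simpa using g.le_of_opNorm_le hg (0, 1)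
  have hG : 0 ≤ G := (abs_nonneg a).trans ha
  have hF : |2 * F p| ≤ 1 := by rw [abs_mul, abs_two]; linarith [abs_F_le hp]
  have h2ad : |2 * a - δ| ≤ 2 * G + 1 :=
    (abs_sub _ _).trans (by rw [abs_mul, abs_two, abs_of_nonneg hδ₀]; linarith)
  have hxy : |p.1 * a + p.2 * b| ≤ 2 * G := by
    have hy : |p.2| ≤ 1 := (norm_snd_le p).trans hp
    refine (abs_add_le _ _).trans ?_
    rw [abs_mul, abs_mul]
    nlinarith [abs_nonneg p.1, abs_nonneg p.2, abs_nonneg a, abs_nonneg b]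
  have hsq : |(a - δ) ^ 2 + b ^ 2| ≤ (G + 1) ^ 2 + G ^ 2 := by
    have had : |a - δ| ≤ G + 1 := (abs_sub _ _).trans (by rw [abs_of_nonneg hδ₀]; linarith)
    rw [abs_of_nonneg (by positivity), ← sq_abs (a - δ), ← sq_abs b]
    gcongr
  have hT : |p.1 * ((a - δ) ^ 2 + b ^ 2) + (p.1 * a + p.2 * b) * (2 * a - δ)|
      ≤ 6 * (G + 1) ^ 2 :=
    calc _ ≤ |p.1| * |(a - δ) ^ 2 + b ^ 2| + |p.1 * a + p.2 * b| * |2 * a - δ| := by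
          rw [← abs_mul, ← abs_mul]; exact abs_add_le _ _
      _ ≤ 1 * ((G + 1) ^ 2 + G ^ 2) + 2 * G * (2 * G + 1) := by gcongr
      _ ≤ 6 * (G + 1) ^ 2 := by nlinarith
  have key : minimalLowerPart p (g - δ • ContinuousLinearMap.fst ℝ ℝ ℝ) - minimalLowerPart p g
      = -(2 * F p * (p.1 * ((a - δ) ^ 2 + b ^ 2) + (p.1 * a + p.2 * b) * (2 * a - δ)) * δ) := by
    simp only [minimalLowerPart, sub_apply, smul_apply, ContinuousLinearMap.coe_fst',
      smul_eq_mul]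
    ring
  rw [key, abs_neg, abs_mul, abs_mul, abs_of_nonneg hδ₀]
  calc _ ≤ 1 * (6 * (G + 1) ^ 2) * δ := by gcongr
    _ = _ := by ring

lemma abs_minimalPrincipalPart_sub_le (hp : ‖p‖ ≤ 1) (hg : ‖g‖ ≤ G) (hH : ‖H‖ ≤ C)
    (hδ₀ : 0 ≤ δ) (hδ₁ : δ ≤ 1) :
    |minimalPrincipalPart p (g - δ • ContinuousLinearMap.fst ℝ ℝ ℝ) H
        - minimalPrincipalPart p g H| ≤ (G + 1) * C * δ := by
  set ξ : ℝ × ℝ := (g (0, 1), -g (1, 0))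
  set η : ℝ × ℝ := (0, δ)
  have hξ : ‖ξ‖ ≤ G := by
    simpa [ξ] using And.intro (g.le_of_opNorm_le hg (0, 1)) (g.le_of_opNorm_le hg (1, 0))
  have hη : ‖η‖ = δ := by simp [η, hδ₀]
  have hC : 0 ≤ C := (norm_nonneg H).trans hH
  have hF : F p ^ 2 ≤ 1 / 4 := by nlinarith [abs_F_le hp, sq_abs (F p), abs_nonneg (F p)]
  have key : minimalPrincipalPart p (g - δ • ContinuousLinearMap.fst ℝ ℝ ℝ) H
      - minimalPrincipalPart p g H = F p ^ 2 * (H ξ η + H η ξ + H η η) := by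
    have hξη : ((g - δ • ContinuousLinearMap.fst ℝ ℝ ℝ) (0, 1),
        -(g - δ • ContinuousLinearMap.fst ℝ ℝ ℝ) (1, 0)) = ξ + η := by
      simp only [ξ, η, sub_apply, smul_apply, ContinuousLinearMap.coe_fst', smul_eq_mul, mul_zero,
        mul_one, sub_zero, neg_sub, Prod.mk_add_mk, add_zero, neg_add_eq_sub]
    rw [minimalPrincipalPart, minimalPrincipalPart, hξη]
    simp only [map_add, add_apply]
    ring
  have hbil : ∀ x y, |H x y| ≤ C * ‖x‖ * ‖y‖ := fun x y =>
    (H.le_opNorm₂ x y).trans (by gcongr)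
  rw [key, abs_mul, abs_of_nonneg (sq_nonneg _)]
  calc _ ≤ 1 / 4 * (C * G * δ + C * δ * G + C * δ * δ) := by
        gcongr
        refine (abs_add_three _ _ _).trans (add_le_add_three ?_ ?_ ?_) <;>
          refine (hbil _ _).trans ?_ <;> rw [hη] <;> gcongr
    _ ≤ (G + 1) * C * δ := by
        nlinarith [mul_le_mul_of_nonneg_left hδ₁ (mul_nonneg hC hδ₀),
          mul_nonneg (mul_nonneg hC hδ₀) ((norm_nonneg ξ).trans hξ)]

end MinimalOperator

section ExpBarrier

variable {κ : ℝ} {q : ℝ × ℝ}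

lemma hasFDerivAt_exp_mul_fst :
    HasFDerivAt (fun q : ℝ × ℝ => Real.exp (κ * q.1))
      ((κ * Real.exp (κ * q.1)) • ContinuousLinearMap.fst ℝ ℝ ℝ) q := by
  simpa [smul_smul, mul_comm] using (hasFDerivAt_fst (p := q)).const_mul κ |>.exp

lemma fderiv_fderiv_exp_mul_fst_apply (d : ℝ × ℝ) :
    fderiv ℝ (fderiv ℝ fun q : ℝ × ℝ => Real.exp (κ * q.1)) q d d
      = κ ^ 2 * Real.exp (κ * q.1) * d.1 ^ 2 := by
  have hD : fderiv ℝ (fun q : ℝ × ℝ => Real.exp (κ * q.1))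
      = fun q => (κ * Real.exp (κ * q.1)) • ContinuousLinearMap.fst ℝ ℝ ℝ :=
    funext fun _ => hasFDerivAt_exp_mul_fst.fderiv
  have hD2 := (hasFDerivAt_exp_mul_fst (κ := κ) (q := q)).const_mul κ |>.smul_const
    (ContinuousLinearMap.fst ℝ ℝ ℝ)
  rw [hD, hD2.fderiv]
  simp only [ContinuousLinearMap.smulRight_apply, smul_apply, ContinuousLinearMap.coe_fst',
    smul_eq_mul]
  ring

lemma le_minimalPrincipalPart_hessian_exp_mul_fst (p : ℝ × ℝ) (g : ℝ × ℝ →L[ℝ] ℝ) :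
    κ ^ 2 * Real.exp (κ * q.1)
      ≤ minimalPrincipalPart p g (fderiv ℝ (fderiv ℝ fun q : ℝ × ℝ => Real.exp (κ * q.1)) q) := by
  simp only [minimalPrincipalPart, fderiv_fderiv_exp_mul_fst_apply]
  have : 0 ≤ F p ^ 2 * (κ ^ 2 * Real.exp (κ * q.1) * g (0, 1) ^ 2) := by positivity
  simp only [one_pow, mul_one, zero_pow two_ne_zero, mul_zero, add_zero]
  linarith

end ExpBarrier

theorem not_isLocalMax_sub_add_exp_mul_fst {u₁ u₂ : ℝ × ℝ → ℝ} {P : ℝ × ℝ} {G C κ ε : ℝ}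
    (h₁ : ContDiffAt ℝ 2 u₁ P) (h₂ : ContDiffAt ℝ 2 u₂ P)
    (he₁ : MinimalEqDisk u₁ P) (he₂ : MinimalEqDisk u₂ P) (hP : ‖P‖ ≤ 1)
    (hG : ‖fderiv ℝ u₂ P‖ ≤ G) (hC : ‖fderiv ℝ (fderiv ℝ u₂) P‖ ≤ C)
    (hκ : 6 * (G + 1) ^ 2 + (G + 1) * C < κ) (hε : 0 < ε)
    (hδ : ε * κ * Real.exp (κ * P.1) ≤ 1) :
    ¬ IsLocalMax (fun q => u₁ q - u₂ q + ε * Real.exp (κ * q.1)) P := by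
  intro hmax
  set φ : ℝ × ℝ → ℝ := fun q => Real.exp (κ * q.1)
  set δ := ε * κ * Real.exp (κ * P.1) with hδ_def
  have hφ : ContDiffAt ℝ 2 φ P := by fun_prop
  have hκ₀ : 0 < κ := by
    have hG₀ : 0 ≤ G := (norm_nonneg _).trans hG
    have hC₀ : 0 ≤ C := (norm_nonneg (fderiv ℝ (fderiv ℝ u₂) P)).trans hC
    nlinarith [mul_nonneg (add_nonneg hG₀ zero_le_one) hC₀]
  have hδ₀ : 0 < δ := by positivity
  have hDu : fderiv ℝ u₁ P = fderiv ℝ u₂ P - δ • ContinuousLinearMap.fst ℝ ℝ ℝ := by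
    have hcrit := hmax.fderiv_eq_zero
    rw [fderiv_sub_add_const_mul (h₁.differentiableAt two_ne_zero)
      (h₂.differentiableAt two_ne_zero) (hφ.differentiableAt two_ne_zero),
      hasFDerivAt_exp_mul_fst.fderiv] at hcrit
    linear_combination (norm := module) hcrit
  have hD2u : fderiv ℝ (fderiv ℝ u₁) P - fderiv ℝ (fderiv ℝ u₂) P
      = fderiv ℝ (fderiv ℝ fun q => u₁ q - u₂ q + ε * φ q) P - ε • fderiv ℝ (fderiv ℝ φ) P := by
    rw [h₁.fderiv_fderiv_sub_add_const_mul h₂ hφ]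
    abel
  have hprincipal : minimalPrincipalPart P (fderiv ℝ u₁ P) (fderiv ℝ (fderiv ℝ u₁) P)
      - minimalPrincipalPart P (fderiv ℝ u₁ P) (fderiv ℝ (fderiv ℝ u₂) P) ≤ -(κ * δ) := by
    rw [← minimalPrincipalPart_sub, hD2u, minimalPrincipalPart_sub, minimalPrincipalPart_smul]
    have hv := minimalPrincipalPart_nonpos (p := P) (g := fderiv ℝ u₁ P)
      (hmax.fderiv_fderiv_apply_self_nonpos ((h₁.sub h₂).add (contDiffAt_const.mul hφ)))
    have hφ2 := le_minimalPrincipalPart_hessian_exp_mul_fst (κ := κ) (q := P) P (fderiv ℝ u₁ P)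
    linarith [mul_le_mul_of_nonneg_left hφ2 hε.le, show κ * δ = ε * (κ ^ 2 * φ P) by ring]
  rw [minimalEqDisk_iff h₁, hDu] at he₁
  rw [minimalEqDisk_iff h₂] at he₂
  rw [hDu] at hprincipal
  have hlower := abs_le.1 (abs_minimalLowerPart_sub_le hP hG hδ₀.le hδ)
  have hrest := abs_le.1 (abs_minimalPrincipalPart_sub_le hP hG hC hδ₀.le hδ)
  linarith [mul_lt_mul_of_pos_right hκ hδ₀]

lemma IsCompact.exists_isMaxOn_add_ge {X : Type*} [TopologicalSpace X] {K : Set X}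
    (hK : IsCompact K) {w φ : X → ℝ} (hw : ContinuousOn w K) (hφ : ContinuousOn φ K) {a : X}
    (ha : a ∈ K) {c : ℝ} (hφ₀ : ∀ x ∈ K, 0 ≤ φ x) (hφc : ∀ x ∈ K, φ x ≤ c) :
    ∃ b ∈ K, w a - c ≤ w b ∧ IsMaxOn (fun x => w x + φ x) K b := by
  obtain ⟨b, hb, hmax⟩ := hK.exists_isMaxOn ⟨a, ha⟩ (hw.add hφ)
  have : w a + φ a ≤ w b + φ b := hmax ha
  exact ⟨b, hb, by linarith [hφ₀ a ha, hφc b hb], hmax⟩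

lemma IsCompact.exists_bound_fderiv_fderiv {E F : Type*} [NormedAddCommGroup E]
    [NormedSpace ℝ E] [NormedAddCommGroup F] [NormedSpace ℝ F] {u : E → F} {S Ω : Set E}
    (hS : IsCompact S) (hΩ : IsOpen Ω) (hSΩ : S ⊆ Ω) (hu : ContDiffOn ℝ 2 u Ω) :
    ∃ G ≥ 0, ∃ C ≥ 0, ∀ q ∈ S, ‖fderiv ℝ u q‖ ≤ G ∧ ‖fderiv ℝ (fderiv ℝ u) q‖ ≤ C := by
  obtain ⟨G, hG⟩ := hS.exists_bound_of_continuousOn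
    ((hu.continuousOn_fderiv_of_isOpen hΩ (by norm_num)).mono hSΩ)
  obtain ⟨C, hC⟩ := hS.exists_bound_of_continuousOn
    (((hu.fderiv_of_isOpen hΩ (m := 1) (by norm_num)).continuousOn_fderiv_of_isOpen hΩ
      (by norm_num)).mono hSΩ)
  exact ⟨max G 0, le_max_right _ _, max C 0, le_max_right _ _, fun q hq =>
    ⟨(hG q hq).trans (le_max_left _ _), (hC q hq).trans (le_max_left _ _)⟩⟩

lemma exists_pos_mul_exp_le {κ m : ℝ} (hκ : 0 < κ) (hm : 0 < m) :
    ∃ ε > 0, ∀ x ≤ 1, ε * Real.exp (κ * x) ≤ m ∧ ε * κ * Real.exp (κ * x) ≤ 1 := by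
  refine ⟨min m (1 / κ) / Real.exp κ, by positivity, fun x hx => ?_⟩
  have hexp : Real.exp (κ * x) ≤ Real.exp κ := Real.exp_le_exp.2 (by nlinarith)
  have hε : min m (1 / κ) / Real.exp κ * Real.exp (κ * x) ≤ min m (1 / κ) := by
    rw [div_mul_eq_mul_div, div_le_iff₀ (Real.exp_pos κ)]
    gcongr
  constructor
  · exact hε.trans (min_le_left _ _)
  · calc _ = κ * (min m (1 / κ) / Real.exp κ * Real.exp (κ * x)) := by ring
      _ ≤ κ * (1 / κ) := by gcongr; exact hε.trans (min_le_right _ _)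
      _ = 1 := by field_simp

lemma norm_le_one_of_mem_closure {Ω : Set (ℝ × ℝ)} (hΩ : Ω ⊆ Metric.ball 0 1) {q : ℝ × ℝ}
    (hq : q ∈ closure Ω) : ‖q‖ ≤ 1 :=
  mem_closedBall_zero_iff.1 (Metric.closure_ball_subset_closedBall (closure_mono hΩ hq))

/-- Classical maximum principle: if `u₁, u₂` are continuous on the closure of a
domain `Ω` in the disk model, satisfy the minimal vertical graph equation in
`Ω`, and `u₁ ≤ u₂` on the full (finite and asymptotic) boundary
`closure Ω \ Ω`, then `u₁ ≤ u₂` on `Ω`. -/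
theorem stmt_16 (Ω : Set (ℝ × ℝ)) (hΩ : IsOpen Ω)
    (hΩball : Ω ⊆ Metric.ball (0 : ℝ × ℝ) 1)
    (u₁ u₂ : ℝ × ℝ → ℝ)
    (hc₁ : ContinuousOn u₁ (closure Ω)) (hc₂ : ContinuousOn u₂ (closure Ω))
    (hs₁ : ContDiffOn ℝ 2 u₁ Ω) (hs₂ : ContDiffOn ℝ 2 u₂ Ω)
    (he₁ : ∀ p ∈ Ω, MinimalEqDisk u₁ p) (he₂ : ∀ p ∈ Ω, MinimalEqDisk u₂ p)
    (hb : ∀ p ∈ closure Ω \ Ω, u₁ p ≤ u₂ p) :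
    ∀ p ∈ Ω, u₁ p ≤ u₂ p := by
  intro p₀ hp₀
  by_contra! hlt
  set m := (u₁ - u₂) p₀ / 2 with hm_def
  have hm : 0 < m := by simp only [m, Pi.sub_apply]; linarith
  have hK : IsCompact (closure Ω) := (Metric.isBounded_ball.subset hΩball).isCompact_closure
  set S := closure Ω ∩ (u₁ - u₂) ⁻¹' Ici m
  have hSΩ : S ⊆ Ω := fun q ⟨hq, hmq⟩ => by
    by_contra hqΩ
    linarith [hb q ⟨hq, hqΩ⟩, show m ≤ u₁ q - u₂ q from hmq]
  have hS : IsCompact S := hK.of_isClosed_subset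
    ((hc₁.sub hc₂).preimage_isClosed_of_isClosed isClosed_closure isClosed_Ici) inter_subset_left
  obtain ⟨G, hG, C, hC, hGC⟩ := hS.exists_bound_fderiv_fderiv hΩ hSΩ hs₂
  set κ := 6 * (G + 1) ^ 2 + (G + 1) * C + 1
  obtain ⟨ε, hε, hεκ⟩ := exists_pos_mul_exp_le (κ := κ) (by positivity) hm
  have hx : ∀ q ∈ closure Ω, q.1 ≤ 1 := fun q hq =>
    (le_abs_self _).trans ((norm_fst_le q).trans (norm_le_one_of_mem_closure hΩball hq))
  obtain ⟨P, hPK, hPm, hPmax⟩ := hK.exists_isMaxOn_add_ge (hc₁.sub hc₂)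
    (φ := fun q => ε * Real.exp (κ * q.1)) (by fun_prop) (subset_closure hp₀)
    (fun q _ => by positivity) (fun q hq => (hεκ q.1 (hx q hq)).1)
  have hPS : P ∈ S := ⟨hPK, show m ≤ (u₁ - u₂) P by linarith [hm_def]⟩
  have hPΩ : Ω ∈ 𝓝 P := hΩ.mem_nhds (hSΩ hPS)
  exact not_isLocalMax_sub_add_exp_mul_fst (hs₁.contDiffAt hPΩ) (hs₂.contDiffAt hPΩ)
    (he₁ P (hSΩ hPS)) (he₂ P (hSΩ hPS)) (norm_le_one_of_mem_closure hΩball hPK) (hGC P hPS).1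
    (hGC P hPS).2 (lt_add_one _) hε (hεκ P.1 (hx P hPK)).2
    ((hPmax.on_subset subset_closure).isLocalMax hPΩ)
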